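/- Let f : [0,1] → ℝ^d be a smooth regular curve. There exist constants ω, μ > 0 such that for every normal vector field φ ∈ H²₀ along f, ∫₀¹ |∇_s² φ|² ds + ω ‖φ‖²_{L²(ds)} ≥ μ ‖φ‖²_{H²(ds)}. -/

import Mathlib

open scoped RealInnerProductSpace
open intervalIntegral

set_option maxHeartbeats 1000000
noncomputable section

/-- The arclength derivative `∂_s g = |f_x|⁻¹ ∂_x g` along the curve `f`. -/
def dS {d : ℕ} (f g : ℝ → EuclideanSpace ℝ (Fin d)) : ℝ → EuclideanSpace ℝ (Fin d) :=
  fun x => ‖deriv f x‖⁻¹ • deriv g x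

/-- The unit tangent `τ = ∂_s f`. -/
def unitTangent {d : ℕ} (f : ℝ → EuclideanSpace ℝ (Fin d)) : ℝ → EuclideanSpace ℝ (Fin d) :=
  dS f f

/-- The normal connection `∇_s g = ∂_s g − ⟨∂_s g, τ⟩ τ`. -/
def nablaS {d : ℕ} (f g : ℝ → EuclideanSpace ℝ (Fin d)) : ℝ → EuclideanSpace ℝ (Fin d) :=
  fun x => dS f g x - ⟪dS f g x, unitTangent f x⟫ • unitTangent f x

/-- The `L²` norm with respect to the arclength measure `ds = |f_x| dx` on `[0,1]`. -/
def L2ds {d : ℕ} (f g : ℝ → EuclideanSpace ℝ (Fin d)) : ℝ :=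
  Real.sqrt (∫ x in (0:ℝ)..1, ‖g x‖ ^ 2 * ‖deriv f x‖)

/-- An `H²₀` normal vector field along `f`: of class `C²`, vanishing together with its first
derivative at the endpoints, and pointwise orthogonal to the tangent of `f` on `[0,1]`. -/
def ClampedNormal {d : ℕ} (f φ : ℝ → EuclideanSpace ℝ (Fin d)) : Prop :=
  ContDiff ℝ 2 φ ∧ φ 0 = 0 ∧ φ 1 = 0 ∧ deriv φ 0 = 0 ∧ deriv φ 1 = 0 ∧
    ∀ x ∈ Set.Icc (0 : ℝ) 1, ⟪φ x, unitTangent f x⟫ = 0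

/-- A `C¹` real function vanishing on `[0,1]` has vanishing derivative on `[0,1]`. -/
lemma zeroDerivOnIcc (g : ℝ → ℝ) (hg : Differentiable ℝ g) (hg' : Continuous (deriv g))
    (h0 : ∀ x ∈ Set.Icc (0:ℝ) 1, g x = 0) : ∀ x ∈ Set.Icc (0:ℝ) 1, deriv g x = 0 := by
  have hIoo : Set.EqOn (deriv g) (fun _ => (0:ℝ)) (Set.Ioo (0:ℝ) 1) := by
    intro x hx
    have hmem : Set.Icc (0:ℝ) 1 ∈ nhds x := Icc_mem_nhds hx.1 hx.2
    have hev : g =ᶠ[nhds x] fun _ => (0:ℝ) := Filter.eventuallyEq_of_mem hmem h0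
    rw [hev.deriv_eq]; simp
  have : Set.EqOn (deriv g) (fun _ => (0:ℝ)) (Set.Icc (0:ℝ) 1) := by
    rw [← closure_Ioo (by norm_num : (0:ℝ) ≠ 1)]
    exact hIoo.closure hg' continuous_const
  exact this

/-- Gårding-type ellipticity of `∇_s²` along a smooth regular curve: there are `ω, μ > 0`
with `∫₀¹ |∇_s² φ|² ds + ω ‖φ‖²_{L²(ds)} ≥ μ ‖φ‖²_{H²(ds)}` for every normal `φ ∈ H²₀`. -/
theorem stmt_11 {d : ℕ} (f : ℝ → EuclideanSpace ℝ (Fin d))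
    (hf : ContDiff ℝ (⊤ : ℕ∞) f) (hreg : ∀ x : ℝ, deriv f x ≠ 0) :
    ∃ ω μ : ℝ, 0 < ω ∧ 0 < μ ∧
      ∀ φ : ℝ → EuclideanSpace ℝ (Fin d), ClampedNormal f φ →
        μ * (L2ds f φ + L2ds f (dS f φ) + L2ds f (dS f (dS f φ))) ^ 2 ≤
          (∫ x in (0:ℝ)..1, ‖nablaS f (nablaS f φ) x‖ ^ 2 * ‖deriv f x‖)
            + ω * (L2ds f φ) ^ 2 := by
  -- basic data about the curve
  have hane : ∀ x, ‖deriv f x‖ ≠ 0 := fun x => norm_ne_zero_iff.mpr (hreg x)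
  have ha0 : ∀ x, (0:ℝ) < ‖deriv f x‖ := fun x => norm_pos_iff.mpr (hreg x)
  have hfd : ContDiff ℝ (⊤ : ℕ∞) (deriv f) := by
    exact (contDiff_infty_iff_deriv.mp hf).2
  have hacd : ContDiff ℝ (⊤ : ℕ∞) (fun x => ‖deriv f x‖) := hfd.norm ℝ hreg
  have hiacd : ContDiff ℝ (⊤ : ℕ∞) (fun x => ‖deriv f x‖⁻¹) := hacd.inv hane
  have hτcd : ContDiff ℝ (⊤ : ℕ∞) (unitTangent f) := hiacd.smul hfd
  have hτd : Differentiable ℝ (unitTangent f) := hτcd.differentiable (by simp)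
  have hdτcd : ContDiff ℝ (⊤ : ℕ∞) (deriv (unitTangent f)) := by
    exact (contDiff_infty_iff_deriv.mp hτcd).2
  have hκcd : ContDiff ℝ (⊤ : ℕ∞) (dS f (unitTangent f)) := hiacd.smul hdτcd
  have hκd : Differentiable ℝ (dS f (unitTangent f)) := hκcd.differentiable (by simp)
  have hdκcd : ContDiff ℝ (⊤ : ℕ∞) (deriv (dS f (unitTangent f))) := by
    exact (contDiff_infty_iff_deriv.mp hκcd).2
  have hρcont : Continuous (dS f (dS f (unitTangent f))) :=
    (hiacd.continuous).smul hdκcd.continuous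
  have hτ1 : ∀ x, ‖unitTangent f x‖ = 1 := by
    intro x
    show ‖‖deriv f x‖⁻¹ • deriv f x‖ = 1
    rw [norm_smul, norm_inv, norm_norm, inv_mul_cancel₀ (hane x)]
  have hττ : ∀ x, ⟪unitTangent f x, unitTangent f x⟫ = 1 := by
    intro x
    rw [real_inner_self_eq_norm_sq, hτ1 x]; norm_num
  -- derivative of the unit tangent is orthogonal to it
  have hτ'τ : ∀ x, ⟪deriv (unitTangent f) x, unitTangent f x⟫ = 0 := by
    intro x
    have h1 : HasDerivAt (fun y => ⟪unitTangent f y, unitTangent f y⟫)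
        (⟪unitTangent f x, deriv (unitTangent f) x⟫ +
          ⟪deriv (unitTangent f) x, unitTangent f x⟫) x :=
      (hτd x).hasDerivAt.inner ℝ (hτd x).hasDerivAt
    have h2 : HasDerivAt (fun y => ⟪unitTangent f y, unitTangent f y⟫) 0 x := by
      have : (fun y => ⟪unitTangent f y, unitTangent f y⟫) = fun _ => (1:ℝ) :=
        funext fun y => hττ y
      rw [this]; exact hasDerivAt_const x 1
    have := h1.unique h2
    rw [real_inner_comm] at this
    linarith
  have hκτ : ∀ x, ⟪dS f (unitTangent f) x, unitTangent f x⟫ = 0 := by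
    intro x
    show ⟪‖deriv f x‖⁻¹ • deriv (unitTangent f) x, unitTangent f x⟫ = 0
    rw [real_inner_smul_left, hτ'τ x, mul_zero]
  -- bounds for the curvature and its arclength derivative on [0,1]
  obtain ⟨K, hK⟩ := isCompact_Icc.exists_bound_of_continuousOn
    (hκcd.continuous.continuousOn :
      ContinuousOn (dS f (unitTangent f)) (Set.Icc (0:ℝ) 1))
  obtain ⟨K', hK'⟩ := isCompact_Icc.exists_bound_of_continuousOn
    (hρcont.continuousOn : ContinuousOn (dS f (dS f (unitTangent f))) (Set.Icc (0:ℝ) 1))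
  have hK0 : 0 ≤ K := le_trans (norm_nonneg _) (hK 0 (by norm_num))
  have hK'0 : 0 ≤ K' := le_trans (norm_nonneg _) (hK' 0 (by norm_num))
  set C : ℝ := K^2 + K' + 2*K + 1 with hCdef
  have hC1 : 1 ≤ C := by nlinarith
  have hC0 : 0 ≤ C := by linarith
  refine ⟨3*C^4, 1/21, by positivity, by norm_num, ?_⟩
  intro φ hcn
  obtain ⟨hφ2, hφ0, hφ1, hdφ0, hdφ1, hort⟩ := hcn
  -- regularity of φ and its arclength derivatives
  have hφd : Differentiable ℝ φ := hφ2.differentiable (by norm_num)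
  have hdφcd : ContDiff ℝ 1 (deriv φ) := by
    have h : ContDiff ℝ (1+1) φ := by norm_num; exact hφ2
    exact (contDiff_succ_iff_deriv.mp h).2.2
  have hψcd : ContDiff ℝ 1 (dS f φ) := (hiacd.of_le (by simp)).smul hdφcd
  have hψd : Differentiable ℝ (dS f φ) := hψcd.differentiable one_ne_zero
  have hdψcont : Continuous (deriv (dS f φ)) := hψcd.continuous_deriv le_rfl
  have hucont : Continuous (dS f (dS f φ)) := (hiacd.continuous).smul hdψcont
  -- conversions between plain and arclength derivatives
  have hφ'eq : ∀ x, deriv φ x = ‖deriv f x‖ • dS f φ x := by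
    intro x
    show deriv φ x = ‖deriv f x‖ • (‖deriv f x‖⁻¹ • deriv φ x)
    rw [smul_smul, mul_inv_cancel₀ (hane x), one_smul]
  have hψ'eq : ∀ x, deriv (dS f φ) x = ‖deriv f x‖ • dS f (dS f φ) x := by
    intro x
    show deriv (dS f φ) x = ‖deriv f x‖ • (‖deriv f x‖⁻¹ • deriv (dS f φ) x)
    rw [smul_smul, mul_inv_cancel₀ (hane x), one_smul]
  have hτ'eq : ∀ x, deriv (unitTangent f) x = ‖deriv f x‖ • dS f (unitTangent f) x := by
    intro x
    show deriv (unitTangent f) x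
        = ‖deriv f x‖ • (‖deriv f x‖⁻¹ • deriv (unitTangent f) x)
    rw [smul_smul, mul_inv_cancel₀ (hane x), one_smul]
  have hκ'eq : ∀ x, deriv (dS f (unitTangent f)) x
      = ‖deriv f x‖ • dS f (dS f (unitTangent f)) x := by
    intro x
    show deriv (dS f (unitTangent f)) x
        = ‖deriv f x‖ • (‖deriv f x‖⁻¹ • deriv (dS f (unitTangent f)) x)
    rw [smul_smul, mul_inv_cancel₀ (hane x), one_smul]
  -- the tangential component of ∂_s φ
  set c : ℝ → ℝ := fun x => ⟪dS f φ x, unitTangent f x⟫ with hcdef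
  have hccd : ContDiff ℝ 1 c := hψcd.inner ℝ (hτcd.of_le (by simp))
  have hcd : Differentiable ℝ c := hccd.differentiable one_ne_zero
  have hdccont : Continuous (deriv c) := hccd.continuous_deriv le_rfl
  have hN1eq : nablaS f φ = fun x => dS f φ x - c x • unitTangent f x := rfl
  have hN1cd : ContDiff ℝ 1 (nablaS f φ) := by
    rw [hN1eq]; exact hψcd.sub (hccd.smul (hτcd.of_le (by simp)))
  have hN1d : Differentiable ℝ (nablaS f φ) := hN1cd.differentiable one_ne_zero
  have hdN1cont : Continuous (deriv (nablaS f φ)) := hN1cd.continuous_deriv le_rfl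
  have hN1deriv : ∀ x, deriv (nablaS f φ) x = deriv (dS f φ) x
      - (c x • deriv (unitTangent f) x + deriv c x • unitTangent f x) := by
    intro x
    have h := ((hψd x).hasDerivAt.sub (((hcd x).hasDerivAt.smul (hτd x).hasDerivAt)))
    rw [hN1eq]
    exact h.deriv
  have hNcont : Continuous (nablaS f (nablaS f φ)) := by
    have hw : Continuous (dS f (nablaS f φ)) := (hiacd.continuous).smul hdN1cont
    show Continuous fun x => dS f (nablaS f φ) x
      - ⟪dS f (nablaS f φ) x, unitTangent f x⟫ • unitTangent f x
    exact hw.sub (((hw.inner (𝕜 := ℝ) hτcd.continuous)).smul hτcd.continuous)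
  -- the key pointwise identity  ∇_s²φ = P(∂_s²φ) − c κ
  have hkey : ∀ x, nablaS f (nablaS f φ) x =
      (dS f (dS f φ) x - ⟪dS f (dS f φ) x, unitTangent f x⟫ • unitTangent f x)
        - c x • dS f (unitTangent f) x := by
    intro x
    have hw : dS f (nablaS f φ) x = dS f (dS f φ) x
        - (‖deriv f x‖⁻¹ * deriv c x) • unitTangent f x
        - c x • dS f (unitTangent f) x := by
      show ‖deriv f x‖⁻¹ • deriv (nablaS f φ) x = _
      rw [hN1deriv x, hτ'eq x]
      show _ = ‖deriv f x‖⁻¹ • deriv (dS f φ) x - _ - _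
      match_scalars <;> field_simp [hane x]
    show dS f (nablaS f φ) x
        - ⟪dS f (nablaS f φ) x, unitTangent f x⟫ • unitTangent f x = _
    rw [hw]
    rw [inner_sub_left, inner_sub_left, real_inner_smul_left, real_inner_smul_left,
      hττ x, hκτ x]
    rw [mul_one, mul_zero, sub_zero]
    module
  -- scalar identity: c = −⟨φ, κ⟩ on [0,1]
  have hcκ : ∀ x ∈ Set.Icc (0:ℝ) 1, c x + ⟪φ x, dS f (unitTangent f) x⟫ = 0 := by
    have hG : ∀ x, HasDerivAt (fun y => ⟪φ y, unitTangent f y⟫)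
        (⟪φ x, deriv (unitTangent f) x⟫ + ⟪deriv φ x, unitTangent f x⟫) x :=
      fun x => (hφd x).hasDerivAt.inner ℝ (hτd x).hasDerivAt
    have hGd : Differentiable ℝ (fun y => ⟪φ y, unitTangent f y⟫) :=
      fun x => (hG x).differentiableAt
    have hGderiv : deriv (fun y => ⟪φ y, unitTangent f y⟫)
        = fun x => ⟪φ x, deriv (unitTangent f) x⟫ + ⟪deriv φ x, unitTangent f x⟫ :=
      funext fun x => (hG x).deriv
    have hGcont : Continuous (deriv (fun y => ⟪φ y, unitTangent f y⟫)) := by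
      rw [hGderiv]
      exact ((hφ2.continuous.inner (hτcd.continuous_deriv (by simp))).add
        ((hdφcd.continuous.inner hτcd.continuous)))
    have h0 := zeroDerivOnIcc _ hGd hGcont hort
    intro x hx
    have := h0 x hx
    rw [hGderiv] at this
    simp only at this
    rw [hτ'eq x, hφ'eq x, real_inner_smul_right, real_inner_smul_left] at this
    have hsum : ‖deriv f x‖ * (⟪φ x, dS f (unitTangent f) x⟫ + c x) = 0 := by
      rw [hcdef]; ring_nf; ring_nf at this; linarith
    have := (mul_eq_zero.mp hsum).resolve_left (hane x)
    linarith
  -- scalar identity: ⟨∂_s²φ, τ⟩ = −2⟨∂_sφ, κ⟩ − ⟨φ, ∂_sκ⟩ on [0,1]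
  have huτ : ∀ x ∈ Set.Icc (0:ℝ) 1,
      ⟪dS f (dS f φ) x, unitTangent f x⟫
        + 2*⟪dS f φ x, dS f (unitTangent f) x⟫
        + ⟪φ x, dS f (dS f (unitTangent f)) x⟫ = 0 := by
    have hM : ∀ x, HasDerivAt (fun y => ⟪dS f φ y, unitTangent f y⟫
          + ⟪φ y, dS f (unitTangent f) y⟫)
        ((⟪dS f φ x, deriv (unitTangent f) x⟫ + ⟪deriv (dS f φ) x, unitTangent f x⟫)
          + (⟪φ x, deriv (dS f (unitTangent f)) x⟫ + ⟪deriv φ x, dS f (unitTangent f) x⟫)) x :=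
      fun x => ((hψd x).hasDerivAt.inner ℝ (hτd x).hasDerivAt).add
        ((hφd x).hasDerivAt.inner ℝ (hκd x).hasDerivAt)
    have hMd : Differentiable ℝ (fun y => ⟪dS f φ y, unitTangent f y⟫
        + ⟪φ y, dS f (unitTangent f) y⟫) := fun x => (hM x).differentiableAt
    have hMderiv : deriv (fun y => ⟪dS f φ y, unitTangent f y⟫
        + ⟪φ y, dS f (unitTangent f) y⟫)
        = fun x => (⟪dS f φ x, deriv (unitTangent f) x⟫
            + ⟪deriv (dS f φ) x, unitTangent f x⟫)
          + (⟪φ x, deriv (dS f (unitTangent f)) x⟫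
            + ⟪deriv φ x, dS f (unitTangent f) x⟫) :=
      funext fun x => (hM x).deriv
    have hMcont : Continuous (deriv (fun y => ⟪dS f φ y, unitTangent f y⟫
        + ⟪φ y, dS f (unitTangent f) y⟫)) := by
      rw [hMderiv]
      exact ((hψcd.continuous.inner (hτcd.continuous_deriv (by simp))).add
          (hdψcont.inner hτcd.continuous)).add
        ((hφ2.continuous.inner (hκcd.continuous_deriv (by simp))).add
          (hdφcd.continuous.inner hκcd.continuous))
    have h0 := zeroDerivOnIcc _ hMd hMcont (fun x hx => by
      have := hcκ x hx; rw [hcdef] at this; simpa [add_comm] using this)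
    intro x hx
    have hz := h0 x hx
    rw [hMderiv] at hz
    simp only at hz
    rw [hτ'eq x, hψ'eq x, hκ'eq x, hφ'eq x, real_inner_smul_right,
      real_inner_smul_left, real_inner_smul_right, real_inner_smul_left] at hz
    have hsum : ‖deriv f x‖ * (⟪dS f (dS f φ) x, unitTangent f x⟫
        + 2*⟪dS f φ x, dS f (unitTangent f) x⟫
        + ⟪φ x, dS f (dS f (unitTangent f)) x⟫) = 0 := by ring_nf; ring_nf at hz; linarith
    exact (mul_eq_zero.mp hsum).resolve_left (hane x)
  -- pointwise bound on [0,1]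
  have hpt : ∀ x ∈ Set.Icc (0:ℝ) 1,
      ‖dS f (dS f φ) x‖ ≤ ‖nablaS f (nablaS f φ) x‖ + C*(‖φ x‖ + ‖dS f φ x‖) := by
    intro x hx
    have hux : dS f (dS f φ) x = nablaS f (nablaS f φ) x
        + c x • dS f (unitTangent f) x
        + ⟪dS f (dS f φ) x, unitTangent f x⟫ • unitTangent f x := by
      rw [hkey x]; module
    have h1 : ‖dS f (dS f φ) x‖ ≤ ‖nablaS f (nablaS f φ) x‖
        + ‖c x • dS f (unitTangent f) x‖
        + ‖⟪dS f (dS f φ) x, unitTangent f x⟫ • unitTangent f x‖ := by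
      conv_lhs => rw [hux]
      exact norm_add₃_le
    rw [norm_smul, norm_smul, hτ1 x, mul_one, Real.norm_eq_abs, Real.norm_eq_abs] at h1
    have hc_abs : |c x| ≤ K * ‖φ x‖ := by
      have h := hcκ x hx
      have : c x = -⟪φ x, dS f (unitTangent f) x⟫ := by linarith
      rw [this, abs_neg]
      calc |⟪φ x, dS f (unitTangent f) x⟫| ≤ ‖φ x‖ * ‖dS f (unitTangent f) x‖ :=
            abs_real_inner_le_norm _ _
        _ ≤ ‖φ x‖ * K := by
            exact mul_le_mul_of_nonneg_left (hK x hx) (norm_nonneg _)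
        _ = K * ‖φ x‖ := mul_comm _ _
    have hs_abs : |⟪dS f (dS f φ) x, unitTangent f x⟫|
        ≤ 2*K*‖dS f φ x‖ + K'*‖φ x‖ := by
      have h := huτ x hx
      have heq : ⟪dS f (dS f φ) x, unitTangent f x⟫
          = -(2*⟪dS f φ x, dS f (unitTangent f) x⟫)
            - ⟪φ x, dS f (dS f (unitTangent f)) x⟫ := by linarith
      rw [heq]
      have h1 : |⟪dS f φ x, dS f (unitTangent f) x⟫| ≤ ‖dS f φ x‖ * K :=
        le_trans (abs_real_inner_le_norm _ _)
          (mul_le_mul_of_nonneg_left (hK x hx) (norm_nonneg _))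
      have h2 : |⟪φ x, dS f (dS f (unitTangent f)) x⟫| ≤ ‖φ x‖ * K' :=
        le_trans (abs_real_inner_le_norm _ _)
          (mul_le_mul_of_nonneg_left (hK' x hx) (norm_nonneg _))
      calc |(-(2*⟪dS f φ x, dS f (unitTangent f) x⟫)
            - ⟪φ x, dS f (dS f (unitTangent f)) x⟫)|
          ≤ |(-(2*⟪dS f φ x, dS f (unitTangent f) x⟫))|
            + |⟪φ x, dS f (dS f (unitTangent f)) x⟫| := abs_sub _ _
        _ ≤ 2*(‖dS f φ x‖ * K) + ‖φ x‖ * K' := by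
            rw [abs_neg, abs_mul, abs_two]
            linarith
        _ = 2*K*‖dS f φ x‖ + K'*‖φ x‖ := by ring
    have hκx := hK x hx
    have hn1 : (0:ℝ) ≤ ‖φ x‖ := norm_nonneg _
    have hn2 : (0:ℝ) ≤ ‖dS f φ x‖ := norm_nonneg _
    have hcabs0 : 0 ≤ |c x| := abs_nonneg _
    nlinarith [abs_nonneg (⟪dS f (dS f φ) x, unitTangent f x⟫), norm_nonneg (dS f (unitTangent f) x)]
  -- squared pointwise bound
  have hpt2 : ∀ x ∈ Set.Icc (0:ℝ) 1,
      ‖dS f (dS f φ) x‖^2 * ‖deriv f x‖ ≤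
        (3*‖nablaS f (nablaS f φ) x‖^2 + 3*C^2*‖φ x‖^2 + 3*C^2*‖dS f φ x‖^2)
          * ‖deriv f x‖ := by
    intro x hx
    have h := hpt x hx
    have hr0 : (0:ℝ) ≤ ‖nablaS f (nablaS f φ) x‖ + C*(‖φ x‖ + ‖dS f φ x‖) := by positivity
    have hsq : ‖dS f (dS f φ) x‖^2
        ≤ (‖nablaS f (nablaS f φ) x‖ + C*(‖φ x‖ + ‖dS f φ x‖))^2 :=
      pow_le_pow_left₀ (norm_nonneg _) h 2
    have hq : ‖dS f (dS f φ) x‖^2 ≤ 3*‖nablaS f (nablaS f φ) x‖^2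
        + 3*C^2*‖φ x‖^2 + 3*C^2*‖dS f φ x‖^2 := by
      nlinarith [hsq, sq_nonneg (‖nablaS f (nablaS f φ) x‖ - C*‖φ x‖),
        sq_nonneg (‖nablaS f (nablaS f φ) x‖ - C*‖dS f φ x‖),
        sq_nonneg (C*‖φ x‖ - C*‖dS f φ x‖)]
    exact mul_le_mul_of_nonneg_right hq (norm_nonneg _)
  -- the four integrals
  set A := ∫ x in (0:ℝ)..1, ‖φ x‖ ^ 2 * ‖deriv f x‖ with hAdef
  set B := ∫ x in (0:ℝ)..1, ‖dS f φ x‖ ^ 2 * ‖deriv f x‖ with hBdef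
  set D := ∫ x in (0:ℝ)..1, ‖dS f (dS f φ) x‖ ^ 2 * ‖deriv f x‖ with hDdef
  set Q := ∫ x in (0:ℝ)..1, ‖nablaS f (nablaS f φ) x‖ ^ 2 * ‖deriv f x‖ with hQdef
  have hcontA : Continuous fun x => ‖φ x‖ ^ 2 * ‖deriv f x‖ :=
    (hφ2.continuous.norm.pow 2).mul hacd.continuous
  have hcontB : Continuous fun x => ‖dS f φ x‖ ^ 2 * ‖deriv f x‖ :=
    (hψcd.continuous.norm.pow 2).mul hacd.continuous
  have hcontD : Continuous fun x => ‖dS f (dS f φ) x‖ ^ 2 * ‖deriv f x‖ :=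
    (hucont.norm.pow 2).mul hacd.continuous
  have hcontQ : Continuous fun x => ‖nablaS f (nablaS f φ) x‖ ^ 2 * ‖deriv f x‖ :=
    (hNcont.norm.pow 2).mul hacd.continuous
  have intA := hcontA.intervalIntegrable (μ := MeasureTheory.volume) (0:ℝ) 1
  have intB := hcontB.intervalIntegrable (μ := MeasureTheory.volume) (0:ℝ) 1
  have intD := hcontD.intervalIntegrable (μ := MeasureTheory.volume) (0:ℝ) 1
  have intQ := hcontQ.intervalIntegrable (μ := MeasureTheory.volume) (0:ℝ) 1
  have hA0' : 0 ≤ A := by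
    rw [hAdef]
    apply intervalIntegral.integral_nonneg (by norm_num)
    intro u _; positivity
  have hB0' : 0 ≤ B := by
    rw [hBdef]
    apply intervalIntegral.integral_nonneg (by norm_num)
    intro u _; positivity
  have hD0' : 0 ≤ D := by
    rw [hDdef]
    apply intervalIntegral.integral_nonneg (by norm_num)
    intro u _; positivity
  have hQ0' : 0 ≤ Q := by
    rw [hQdef]
    apply intervalIntegral.integral_nonneg (by norm_num)
    intro u _; positivity
  -- first main integral inequality
  have h1 : D ≤ 3*Q + 3*C^2*A + 3*C^2*B := by
    have intR : IntervalIntegrable (fun x => (3*‖nablaS f (nablaS f φ) x‖^2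
          + 3*C^2*‖φ x‖^2 + 3*C^2*‖dS f φ x‖^2) * ‖deriv f x‖)
        MeasureTheory.volume 0 1 :=
      ((((continuous_const.mul (hNcont.norm.pow 2)).add
          (continuous_const.mul (hφ2.continuous.norm.pow 2))).add
          (continuous_const.mul (hψcd.continuous.norm.pow 2))).mul
          hacd.continuous).intervalIntegrable 0 1
    have hmono := intervalIntegral.integral_mono_on (by norm_num : (0:ℝ) ≤ 1) intD
      intR hpt2
    refine le_trans hmono ?_
    have hfun : (fun x => (3*‖nablaS f (nablaS f φ) x‖^2 + 3*C^2*‖φ x‖^2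
          + 3*C^2*‖dS f φ x‖^2) * ‖deriv f x‖)
        = fun x => 3*(‖nablaS f (nablaS f φ) x‖ ^ 2 * ‖deriv f x‖)
          + (3*C^2*(‖φ x‖ ^ 2 * ‖deriv f x‖) + 3*C^2*(‖dS f φ x‖ ^ 2 * ‖deriv f x‖)) :=
      funext fun x => by ring
    rw [hfun, intervalIntegral.integral_add (intQ.const_mul 3)
        ((intA.const_mul (3*C^2)).add (intB.const_mul (3*C^2))),
      intervalIntegral.integral_add (intA.const_mul (3*C^2)) (intB.const_mul (3*C^2)),
      intervalIntegral.integral_const_mul, intervalIntegral.integral_const_mul,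
      intervalIntegral.integral_const_mul]
    rw [← hAdef, ← hBdef, ← hQdef]
    linarith
  -- integration by parts
  have hF : ∀ x ∈ Set.uIcc (0:ℝ) 1, HasDerivAt (fun y => ⟪φ y, dS f φ y⟫)
      ((fun x => ⟪φ x, deriv (dS f φ) x⟫ + ⟪deriv φ x, dS f φ x⟫) x) x :=
    fun x _ => (hφd x).hasDerivAt.inner ℝ (hψd x).hasDerivAt
  have hFint : IntervalIntegrable
      (fun x => ⟪φ x, deriv (dS f φ) x⟫ + ⟪deriv φ x, dS f φ x⟫)
      MeasureTheory.volume 0 1 :=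
    ((hφ2.continuous.inner hdψcont).add
      (hdφcd.continuous.inner hψcd.continuous)).intervalIntegrable 0 1
  have hIBP : ∫ x in (0:ℝ)..1, (⟪φ x, deriv (dS f φ) x⟫ + ⟪deriv φ x, dS f φ x⟫) = 0 := by
    rw [intervalIntegral.integral_eq_sub_of_hasDerivAt hF hFint, hφ1, hφ0]
    simp
  have hintφu : IntervalIntegrable (fun x => ⟪φ x, dS f (dS f φ) x⟫ * ‖deriv f x‖)
      MeasureTheory.volume 0 1 :=
    ((hφ2.continuous.inner hucont).mul hacd.continuous).intervalIntegrable 0 1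
  have hIBP2 : (∫ x in (0:ℝ)..1, ⟪φ x, dS f (dS f φ) x⟫ * ‖deriv f x‖) + B = 0 := by
    have hfun : (fun x => ⟪φ x, deriv (dS f φ) x⟫ + ⟪deriv φ x, dS f φ x⟫)
        = fun x => ⟪φ x, dS f (dS f φ) x⟫ * ‖deriv f x‖
          + ‖dS f φ x‖ ^ 2 * ‖deriv f x‖ := funext fun x => by
      rw [hψ'eq x, hφ'eq x, real_inner_smul_right, real_inner_smul_left,
        real_inner_self_eq_norm_sq]
      ring
    rw [hfun, intervalIntegral.integral_add hintφu intB, ← hBdef] at hIBP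
    exact hIBP
  -- second main integral inequality (interpolation)
  have h2 : 6*C^2*B ≤ D + 9*C^4*A := by
    have hBeq : B = ∫ x in (0:ℝ)..1, -(⟪φ x, dS f (dS f φ) x⟫ * ‖deriv f x‖) := by
      rw [intervalIntegral.integral_neg]
      linarith
    have hptB : ∀ x ∈ Set.Icc (0:ℝ) 1,
        6*C^2 * (-(⟪φ x, dS f (dS f φ) x⟫ * ‖deriv f x‖))
          ≤ ‖dS f (dS f φ) x‖ ^ 2 * ‖deriv f x‖ + 9*C^4*(‖φ x‖ ^ 2 * ‖deriv f x‖) := by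
      intro x _
      have hi : -⟪φ x, dS f (dS f φ) x⟫ ≤ ‖φ x‖ * ‖dS f (dS f φ) x‖ := by
        have h := abs_real_inner_le_norm (φ x) (dS f (dS f φ) x)
        have := neg_abs_le ⟪φ x, dS f (dS f φ) x⟫
        linarith
      have hsc : 6*C^2 * (-⟪φ x, dS f (dS f φ) x⟫)
          ≤ ‖dS f (dS f φ) x‖ ^ 2 + 9*C^4*‖φ x‖ ^ 2 := by
        nlinarith [sq_nonneg (‖dS f (dS f φ) x‖ - 3*C^2*‖φ x‖), hC0, sq_nonneg C,
          mul_nonneg (mul_nonneg (norm_nonneg (φ x)) (norm_nonneg (dS f (dS f φ) x))) (sq_nonneg C)]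
      have := mul_le_mul_of_nonneg_right hsc (norm_nonneg (deriv f x))
      calc 6*C^2 * (-(⟪φ x, dS f (dS f φ) x⟫ * ‖deriv f x‖))
          = (6*C^2 * (-⟪φ x, dS f (dS f φ) x⟫)) * ‖deriv f x‖ := by ring
        _ ≤ (‖dS f (dS f φ) x‖ ^ 2 + 9*C^4*‖φ x‖ ^ 2) * ‖deriv f x‖ := this
        _ = ‖dS f (dS f φ) x‖ ^ 2 * ‖deriv f x‖ + 9*C^4*(‖φ x‖ ^ 2 * ‖deriv f x‖) := by ring
    have hmono := intervalIntegral.integral_mono_on (by norm_num : (0:ℝ) ≤ 1)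
      ((hintφu.neg).const_mul (6*C^2))
      (intD.add (intA.const_mul (9*C^4))) hptB
    rw [intervalIntegral.integral_const_mul,
      intervalIntegral.integral_add intD (intA.const_mul (9*C^4)),
      intervalIntegral.integral_const_mul, ← hAdef, ← hDdef] at hmono
    calc 6*C^2*B = 6*C^2 * ∫ x in (0:ℝ)..1, -(⟪φ x, dS f (dS f φ) x⟫ * ‖deriv f x‖) := by
          rw [← hBeq]
      _ ≤ D + 9*C^4*A := hmono
  -- identify the L² norms
  have hA2 : (L2ds f φ)^2 = A := by
    rw [hAdef]; exact Real.sq_sqrt (hAdef ▸ hA0')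
  have hB2 : (L2ds f (dS f φ))^2 = B := by
    rw [hBdef]; exact Real.sq_sqrt (hBdef ▸ hB0')
  have hD2 : (L2ds f (dS f (dS f φ)))^2 = D := by
    rw [hDdef]; exact Real.sq_sqrt (hDdef ▸ hD0')
  have hL0 : 0 ≤ L2ds f φ := Real.sqrt_nonneg _
  have hL1 : 0 ≤ L2ds f (dS f φ) := Real.sqrt_nonneg _
  have hL2 : 0 ≤ L2ds f (dS f (dS f φ)) := Real.sqrt_nonneg _
  have hS : (L2ds f φ + L2ds f (dS f φ) + L2ds f (dS f (dS f φ)))^2 ≤ 3*(A+B+D) := by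
    nlinarith [sq_nonneg (L2ds f φ - L2ds f (dS f φ)),
      sq_nonneg (L2ds f (dS f φ) - L2ds f (dS f (dS f φ))),
      sq_nonneg (L2ds f φ - L2ds f (dS f (dS f φ)))]
  -- numeric assembly
  have hCC2 : 1 ≤ C^2 := by nlinarith
  have hCC4 : C^2 ≤ C^4 := by nlinarith
  have hCC4' : (1:ℝ) ≤ C^4 := le_trans hCC2 hCC4
  have hE1 : C^2*A ≤ C^4*A := mul_le_mul_of_nonneg_right hCC4 hA0'
  have hE2 : A ≤ C^4*A := by
    calc A = 1*A := (one_mul A).symm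
      _ ≤ C^4*A := mul_le_mul_of_nonneg_right hCC4' hA0'
  have hE3 : 6*B ≤ 6*(C^2*B) := by
    have : B ≤ C^2*B := by
      calc B = 1*B := (one_mul B).symm
        _ ≤ C^2*B := mul_le_mul_of_nonneg_right hCC2 hB0'
    linarith
  have hE4 : (0:ℝ) ≤ C^4*A := mul_nonneg (by positivity) hA0'
  have hD6 : D ≤ 6*Q + 15*(C^4*A) := by linarith [h1, h2, hE1]
  have hB6 : 6*B ≤ 6*Q + 24*(C^4*A) := by linarith [hE3, h2, hD6]
  rw [hA2]
  have hfin : (L2ds f φ + L2ds f (dS f φ) + L2ds f (dS f (dS f φ)))^2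
      ≤ 21*Q + 63*(C^4*A) := by linarith [hS, hD6, hB6, hE2, hE4, hQ0', hB0', hA0']
  have hgoal : Q + 3 * C ^ 4 * A = Q + 3*(C^4*A) := by ring
  rw [hgoal]
  set S := L2ds f φ + L2ds f (dS f φ) + L2ds f (dS f (dS f φ)) with hSdef
  have hstep : 1/21 * S^2 ≤ 1/21 * (21*Q + 63*(C^4*A)) :=
    mul_le_mul_of_nonneg_left hfin (by norm_num)
  exact le_of_le_of_eq hstep (by ring)
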